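/- Let A be a commutative ring and I ⊆ A an ideal with I² = 0. Let E be a bounded complex of A-modules such that H^i(E ⊗^L_A N) = 0 for all i < 0 and every A-module N on which I acts by zero (i.e., every (A/I)-module viewed as an A-module). Then H^i(E ⊗^L_A N) = 0 for all i < 0 and every A-module N. -/

import Mathlib

open CategoryTheory TensorProduct

/-- The base change `B ⊗[A] E` of a cochain complex `E` of `A`-modules along an
`A`-algebra `B`; this computes the derived tensor product `E ⊗^L_A B` when `E` is a
bounded-above complex of projective `A`-modules. -/
noncomputable def bcComplex {A : Type} [CommRing A] (B : Type) [CommRing B] [Algebra A B]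
    (E : CochainComplex (ModuleCat A) ℤ) : CochainComplex (ModuleCat B) ℤ :=
  CochainComplex.of (fun i => ModuleCat.of B (B ⊗[A] E.X i))
    (fun i => ModuleCat.ofHom (LinearMap.baseChange B (E.d i (i + 1)).hom))
    (fun i => by
      have h : (E.d (i+1) (i+1+1)).hom.comp (E.d i (i+1)).hom = 0 := by
        rw [← ModuleCat.hom_comp, E.d_comp_d i (i+1) (i+1+1), ModuleCat.hom_zero]
      apply ModuleCat.hom_ext
      rw [ModuleCat.hom_comp, ModuleCat.hom_ofHom, ModuleCat.hom_ofHom, ModuleCat.hom_zero,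
        ← LinearMap.baseChange_comp, h, LinearMap.baseChange_zero])

/-- The degreewise tensor product `E ⊗[A] N` of a cochain complex `E` of `A`-modules with an
`A`-module `N`; this computes the derived tensor product `E ⊗^L_A N` when `E` is a
bounded-above complex of projective `A`-modules. -/
noncomputable def tensComplex {A : Type} [CommRing A]
    (E : CochainComplex (ModuleCat A) ℤ) (N : Type) [AddCommGroup N] [Module A N] :
    CochainComplex (ModuleCat A) ℤ :=
  CochainComplex.of (fun i => ModuleCat.of A (E.X i ⊗[A] N))
    (fun i => ModuleCat.ofHom (LinearMap.rTensor N (E.d i (i + 1)).hom))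
    (fun i => by
      have h : (E.d (i+1) (i+1+1)).hom.comp (E.d i (i+1)).hom = 0 := by
        rw [← ModuleCat.hom_comp, E.d_comp_d i (i+1) (i+1+1), ModuleCat.hom_zero]
      apply ModuleCat.hom_ext
      rw [ModuleCat.hom_comp, ModuleCat.hom_ofHom, ModuleCat.hom_ofHom, ModuleCat.hom_zero,
        ← LinearMap.rTensor_comp, h, LinearMap.rTensor_zero])

noncomputable def tmapHom {A : Type} [CommRing A] (E : CochainComplex (ModuleCat A) ℤ)
    {M P : Type} [AddCommGroup M] [Module A M] [AddCommGroup P] [Module A P]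
    (φ : M →ₗ[A] P) : tensComplex E M ⟶ tensComplex E P where
  f i := ModuleCat.ofHom (LinearMap.lTensor (E.X i) φ)
  comm' i j hij := by
    obtain rfl : i + 1 = j := hij
    simp only [tensComplex, CochainComplex.of_d]
    apply ModuleCat.hom_ext
    show (LinearMap.rTensor P (E.d i (i+1)).hom).comp (LinearMap.lTensor (E.X i) φ)
      = (LinearMap.lTensor (E.X (i+1)) φ).comp (LinearMap.rTensor M (E.d i (i+1)).hom)
    rw [LinearMap.rTensor_comp_lTensor, LinearMap.lTensor_comp_rTensor]

/-- Let `A` be a commutative ring and `I ⊆ A` an ideal with `I² = 0`.  Let `E` be a bounded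
complex of `A`-modules (modelled by a bounded complex of projective `A`-modules, computing
derived tensor products) such that `H^i(E ⊗^L_A N) = 0` for all `i < 0` and every `A`-module
`N` on which `I` acts by zero.  Then `H^i(E ⊗^L_A N) = 0` for all `i < 0` and every
`A`-module `N`. -/
theorem stmt_2 {A : Type} [CommRing A] (I : Ideal A) (hI : I ^ 2 = ⊥)
    (E : CochainComplex (ModuleCat A) ℤ)
    (hproj : ∀ i, Module.Projective A (E.X i))
    (hbdd : ∃ a b : ℤ, ∀ i, (i < a ∨ b < i) → Subsingleton (E.X i))
    (h : ∀ (N : Type) [AddCommGroup N] [Module A N], (∀ x ∈ I, ∀ n : N, x • n = 0) →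
      ∀ i : ℤ, i < 0 → Subsingleton ((tensComplex E N).homology i)) :
    ∀ (N : Type) [AddCommGroup N] [Module A N],
      ∀ i : ℤ, i < 0 → Subsingleton ((tensComplex E N).homology i) := by
  intro N _ _ i hi
  set IN : Submodule A N := I • ⊤ with hINdef
  -- IN is killed by I
  have hIN : ∀ x ∈ I, ∀ n : ↥IN, x • n = 0 := by
    intro x hx n
    refine Subtype.ext ?_
    show x • (n : N) = 0
    refine Submodule.smul_induction_on n.2 ?_ ?_
    · intro r hr m _
      rw [smul_smul]
      have hmem : x * r ∈ I ^ 2 := by rw [sq]; exact Ideal.mul_mem_mul hx hr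
      rw [hI, Ideal.mem_bot] at hmem
      rw [hmem, zero_smul]
    · intro m m' hm hm'
      rw [smul_add, hm, hm', add_zero]
  -- N / IN is killed by I
  have hQ : ∀ x ∈ I, ∀ n : N ⧸ IN, x • n = 0 := by
    intro x hx n
    obtain ⟨m, rfl⟩ := Submodule.mkQ_surjective IN n
    rw [← map_smul]
    exact (Submodule.Quotient.mk_eq_zero _).mpr (Submodule.smul_mem_smul hx Submodule.mem_top)
  -- the short exact sequence of complexes
  have hfg : tmapHom E IN.subtype ≫ tmapHom E IN.mkQ = 0 := by
    ext j : 1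
    rw [HomologicalComplex.comp_f, HomologicalComplex.zero_f]
    apply ModuleCat.hom_ext
    rw [ModuleCat.hom_zero]
    show (LinearMap.lTensor (E.X j) IN.mkQ).comp (LinearMap.lTensor (E.X j) IN.subtype) = 0
    rw [← LinearMap.lTensor_comp]
    have h0 : IN.mkQ.comp IN.subtype = 0 := by
      ext x
      simp
    rw [h0, LinearMap.lTensor_zero]
  set S : ShortComplex (CochainComplex (ModuleCat A) ℤ) :=
    ShortComplex.mk (tmapHom E IN.subtype) (tmapHom E IN.mkQ) hfg with hSdef
  have hS : S.ShortExact := by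
    apply HomologicalComplex.shortExact_of_degreewise_shortExact
    intro j
    haveI := hproj j
    haveI : Mono (S.map (HomologicalComplex.eval _ _ j)).f := by
      rw [ModuleCat.mono_iff_injective]
      show Function.Injective (LinearMap.lTensor (E.X j) IN.subtype)
      exact Module.Flat.lTensor_preserves_injective_linearMap _
        (Submodule.injective_subtype IN)
    haveI : Epi (S.map (HomologicalComplex.eval _ _ j)).g := by
      rw [ModuleCat.epi_iff_surjective]
      show Function.Surjective (LinearMap.lTensor (E.X j) IN.mkQ)
      exact LinearMap.lTensor_surjective _ (Submodule.mkQ_surjective IN)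
    refine ⟨?_⟩
    rw [ShortComplex.moduleCat_exact_iff_range_eq_ker]
    have hex := lTensor_exact (E.X j) (LinearMap.exact_subtype_mkQ IN)
      (Submodule.mkQ_surjective IN)
    show (LinearMap.lTensor (E.X j) IN.subtype).range = (LinearMap.lTensor (E.X j) IN.mkQ).ker
    exact (LinearMap.exact_iff.mp hex).symm
  -- homology
  have h1 : Limits.IsZero ((tensComplex E ↥IN).homology i) := by
    haveI := h ↥IN hIN i hi
    exact ModuleCat.isZero_of_subsingleton _
  have h3 : Limits.IsZero ((tensComplex E (N ⧸ IN)).homology i) := by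
    haveI := h (N ⧸ IN) hQ i hi
    exact ModuleCat.isZero_of_subsingleton _
  have e2 := hS.homology_exact₂ i
  have hz := e2.isZero_X₂ (h1.eq_of_src _ _) (h3.eq_of_tgt _ _)
  have hid : (𝟙 ((tensComplex E N).homology i)) = 0 := hz.eq_of_src _ _
  refine ⟨fun a b => ?_⟩
  have ha := LinearMap.congr_fun (congrArg ModuleCat.Hom.hom hid) a
  have hb := LinearMap.congr_fun (congrArg ModuleCat.Hom.hom hid) b
  simp only [ModuleCat.hom_id, ModuleCat.hom_zero, LinearMap.id_apply, LinearMap.zero_apply] at ha hb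
  exact ha.trans hb.symm
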